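/- arXiv:1109.6348 — 2 statements merged into one kernel-verified Lean document; each statement's English description precedes it below -/
import Mathlib

section
/- Let φ be a satisfiable 2-SAT formula such that for no literal l is there a directed path from l to ¬l in G(φ), and let X be a model of φ. Then X is a δ(1,1)-model of φ if and only if both of the following hold: (C1) for every simple path (l1, l2, l3) of length 2 in G(φ), X(l1) = false and X(l3) = true; (C2) whenever (l1, l2) and (l1, l3) are edges of G(φ) with l2 ≠ l3, not all three of X(l1), X(l2), X(l3) are false. -/
/-- `flip1 X i` is the assignment `X` with bit `i` flipped. -/
def flip1 {V : Type*} [DecidableEq V] (X : V → Bool) (i : V) : V → Bool :=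
  Function.update X i (! X i)

/-- A `δ(1,1)`-model of `φ`: a model `X` such that for every index `i`, either `δ_i(X)` is a
model or there is some `j ≠ i` such that `δ_{ij}(X)` is a model. -/
def IsDelta11Model {V : Type*} [DecidableEq V] (φ : (V → Bool) → Prop) (X : V → Bool) : Prop :=
  φ X ∧ ∀ i : V, φ (flip1 X i) ∨ ∃ j, j ≠ i ∧ φ (flip1 (flip1 X i) j)

/-- A literal over `n` variables: a variable together with a polarity
(`true` = positive literal, `false` = negative literal). -/
abbrev Lit (n : ℕ) := Fin n × Bool

/-- The truth value of a literal under an assignment. -/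
def litVal {n : ℕ} (X : Fin n → Bool) (l : Lit n) : Bool :=
  if l.2 then X l.1 else ! X l.1

/-- The negation of a literal. -/
def negLit {n : ℕ} (l : Lit n) : Lit n := (l.1, ! l.2)

/-- A 2-SAT formula: a finite set of clauses, each a disjunction of two literals on
distinct variables. -/
structure TwoSat (n : ℕ) where
  clauses : Finset (Lit n × Lit n)
  distinct : ∀ c ∈ clauses, c.1.1 ≠ c.2.1

/-- An assignment is a model of a 2-SAT formula if it satisfies every clause. -/
def TwoSat.Sat {n : ℕ} (φ : TwoSat n) (X : Fin n → Bool) : Prop :=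
  ∀ c ∈ φ.clauses, litVal X c.1 = true ∨ litVal X c.2 = true

/-- The edges of the implication graph `G(φ)`: each clause `(a ∨ b)` contributes the
directed edges `(¬a, b)` and `(¬b, a)`. -/
def TwoSat.Edge {n : ℕ} (φ : TwoSat n) (a b : Lit n) : Prop :=
  ∃ c ∈ φ.clauses, (a = negLit c.1 ∧ b = c.2) ∨ (a = negLit c.2 ∧ b = c.1)


lemma negLit_negLit {n : ℕ} (l : Lit n) : negLit (negLit l) = l := by simp [negLit]

lemma negLit_fst {n : ℕ} (l : Lit n) : (negLit l).1 = l.1 := rfl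

lemma litVal_negLit {n : ℕ} (X : Fin n → Bool) (l : Lit n) :
    litVal X (negLit l) = ! litVal X l := by
  cases hl : l.2 <;> simp [litVal, negLit, hl]

lemma litVal_flip1 {n : ℕ} (X : Fin n → Bool) (i : Fin n) (l : Lit n) :
    litVal (flip1 X i) l = if l.1 = i then !(litVal X l) else litVal X l := by
  by_cases h : l.1 = i <;> cases hl : l.2 <;>
    simp [litVal, flip1, Function.update_apply, h, hl]

lemma litVal_flip2 {n : ℕ} (X : Fin n → Bool) {i j : Fin n} (hij : j ≠ i) (l : Lit n) :
    litVal (flip1 (flip1 X i) j) l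
      = if l.1 = i ∨ l.1 = j then !(litVal X l) else litVal X l := by
  rw [litVal_flip1, litVal_flip1]
  by_cases h1 : l.1 = i <;> by_cases h2 : l.1 = j <;> simp_all

lemma edge_fst_ne {n : ℕ} (φ : TwoSat n) {a b : Lit n} (h : φ.Edge a b) : a.1 ≠ b.1 := by
  obtain ⟨c, hc, ⟨rfl, rfl⟩ | ⟨rfl, rfl⟩⟩ := h
  · simpa [negLit] using φ.distinct c hc
  · simpa [negLit] using (φ.distinct c hc).symm

lemma edge_symm {n : ℕ} (φ : TwoSat n) {a b : Lit n} (h : φ.Edge a b) :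
    φ.Edge (negLit b) (negLit a) := by
  obtain ⟨c, hc, ⟨rfl, rfl⟩ | ⟨rfl, rfl⟩⟩ := h
  · exact ⟨c, hc, Or.inr ⟨rfl, negLit_negLit _⟩⟩
  · exact ⟨c, hc, Or.inl ⟨rfl, negLit_negLit _⟩⟩

lemma edge_of_clause {n : ℕ} (φ : TwoSat n) {c : Lit n × Lit n} (hc : c ∈ φ.clauses) :
    φ.Edge (negLit c.1) c.2 ∧ φ.Edge (negLit c.2) c.1 :=
  ⟨⟨c, hc, Or.inl ⟨rfl, rfl⟩⟩, ⟨c, hc, Or.inr ⟨rfl, rfl⟩⟩⟩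

lemma sat_edge {n : ℕ} (φ : TwoSat n) {Y : Fin n → Bool} (hY : φ.Sat Y) {a b : Lit n}
    (h : φ.Edge a b) (ha : litVal Y a = true) : litVal Y b = true := by
  obtain ⟨c, hc, ⟨ha', rfl⟩ | ⟨ha', rfl⟩⟩ := h
  · rcases hY c hc with h1 | h2
    · have : c.1 = negLit a := by rw [ha', negLit_negLit]
      rw [this, litVal_negLit, ha] at h1; simp at h1
    · exact h2
  · rcases hY c hc with h1 | h2
    · exact h1
    · have : c.2 = negLit a := by rw [ha', negLit_negLit]
      rw [this, litVal_negLit, ha] at h2; simp at h2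

lemma lit_eq_of_val {n : ℕ} (X : Fin n → Bool) {l m : Lit n} (h1 : l.1 = m.1)
    (h2 : litVal X l = litVal X m) : l = m := by
  obtain ⟨v, p⟩ := l; obtain ⟨w, q⟩ := m
  simp only at h1; subst h1
  cases p <;> cases q <;> simp_all [litVal]

lemma neg_eq_of {n : ℕ} (X : Fin n → Bool) {l m : Lit n} (h1 : l.1 = m.1)
    (h2 : litVal X l = true) (h3 : litVal X m = false) : negLit l = m :=
  lit_eq_of_val X (by rw [negLit_fst, h1]) (by simp [litVal_negLit, h2, h3])

lemma unsat_flip1 {n : ℕ} (φ : TwoSat n) {X : Fin n → Bool} (hX : φ.Sat X) {i : Fin n}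
    (h : ¬ φ.Sat (flip1 X i)) :
    ∃ a b : Lit n, φ.Edge a b ∧ a.1 = i ∧ litVal X a = false ∧ litVal X b = false := by
  simp only [TwoSat.Sat] at h; push_neg at h
  obtain ⟨c, hc, hv1, hv2⟩ := h
  simp only [ne_eq, Bool.not_eq_true, litVal_flip1] at hv1 hv2
  by_cases h1 : c.1.1 = i <;> by_cases h2 : c.2.1 = i
  · exact absurd (h1.trans h2.symm) (φ.distinct c hc)
  · rw [if_pos h1] at hv1; rw [if_neg h2] at hv2
    refine ⟨negLit c.1, c.2, (edge_of_clause φ hc).1, h1, ?_, hv2⟩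
    rw [litVal_negLit]; simp at hv1; simp [hv1]
  · rw [if_neg h1] at hv1; rw [if_pos h2] at hv2
    refine ⟨negLit c.2, c.1, (edge_of_clause φ hc).2, h2, ?_, hv1⟩
    rw [litVal_negLit]; simp at hv2; simp [hv2]
  · rw [if_neg h1] at hv1; rw [if_neg h2] at hv2
    rcases hX c hc with h | h <;> simp_all

lemma lemD {n : ℕ} (φ : TwoSat n) {X : Fin n → Bool} (hd : IsDelta11Model φ.Sat X)
    {a b c : Lit n} (hab : φ.Edge a b) (hbc : φ.Edge b c) (hac : a.1 ≠ c.1)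
    (hxa : litVal X a = false) (hxb : litVal X b = false) (hxc : litVal X c = false) :
    False := by
  obtain ⟨hXm, hflip⟩ := hd
  have hab1 := edge_fst_ne φ hab
  have hbc1 := edge_fst_ne φ hbc
  have h1 : ¬ φ.Sat (flip1 X a.1) := by
    intro hs
    have ha : litVal (flip1 X a.1) a = true := by rw [litVal_flip1]; simp [hxa]
    have hb := sat_edge φ hs hab ha
    rw [litVal_flip1, if_neg (Ne.symm hab1), hxb] at hb
    exact Bool.false_ne_true hb
  rcases hflip a.1 with h | ⟨j, hj, hs⟩
  · exact h1 h
  have hYa : litVal (flip1 (flip1 X a.1) j) a = true := by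
    rw [litVal_flip2 X hj]; simp [hxa]
  have hYb := sat_edge φ hs hab hYa
  rw [litVal_flip2 X hj] at hYb
  have hbj : b.1 = j := by
    by_cases hm : b.1 = a.1 ∨ b.1 = j
    · rcases hm with hm | hm
      · exact absurd hm.symm hab1
      · exact hm
    · rw [if_neg hm, hxb] at hYb; exact absurd hYb Bool.false_ne_true
  have hYc := sat_edge φ hs hbc (by rw [litVal_flip2 X hj]; exact hYb)
  rw [litVal_flip2 X hj] at hYc
  by_cases hm : c.1 = a.1 ∨ c.1 = j
  · rcases hm with hm | hm
    · exact hac hm.symm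
    · exact hbc1 (hbj.trans hm.symm)
  · rw [if_neg hm, hxc] at hYc; exact absurd hYc Bool.false_ne_true

lemma lemE {n : ℕ} (φ : TwoSat n) {X : Fin n → Bool} (hd : IsDelta11Model φ.Sat X)
    {l1 l2 l3 : Lit n} (h12 : φ.Edge l1 l2) (h13 : φ.Edge l1 l3) (hne : l2 ≠ l3)
    (hx1 : litVal X l1 = false) (hx2 : litVal X l2 = false) (hx3 : litVal X l3 = false) :
    False := by
  obtain ⟨hXm, hflip⟩ := hd
  have h121 := edge_fst_ne φ h12
  have h131 := edge_fst_ne φ h13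
  have h1 : ¬ φ.Sat (flip1 X l1.1) := by
    intro hs
    have ha : litVal (flip1 X l1.1) l1 = true := by rw [litVal_flip1]; simp [hx1]
    have hb := sat_edge φ hs h12 ha
    rw [litVal_flip1, if_neg (Ne.symm h121), hx2] at hb
    exact Bool.false_ne_true hb
  rcases hflip l1.1 with h | ⟨j, hj, hs⟩
  · exact h1 h
  have hYa : litVal (flip1 (flip1 X l1.1) j) l1 = true := by
    rw [litVal_flip2 X hj]; simp [hx1]
  have key : ∀ m : Lit n, φ.Edge l1 m → litVal X m = false → m.1 = j := by
    intro m hm hxm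
    have hYm := sat_edge φ hs hm hYa
    rw [litVal_flip2 X hj] at hYm
    by_cases hc : m.1 = l1.1 ∨ m.1 = j
    · rcases hc with hc | hc
      · exact absurd hc.symm (edge_fst_ne φ hm)
      · exact hc
    · rw [if_neg hc, hxm] at hYm; exact absurd hYm Bool.false_ne_true
  have e2 := key l2 h12 hx2
  have e3 := key l3 h13 hx3
  exact hne (lit_eq_of_val X (e2.trans e3.symm) (hx2.trans hx3.symm))

/-- Let `φ` be a satisfiable 2-SAT formula with no directed path (of length
at least 1) from any literal `l` to `¬l` in `G(φ)`, and let `X` be a model of `φ`.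
Then `X` is a `δ(1,1)`-model iff conditions (C1) and (C2) hold. -/
theorem statement6 {n : ℕ} (φ : TwoSat n)
    (hsat : ∃ Y : Fin n → Bool, φ.Sat Y)
    (hnopath : ∀ l : Lit n, ¬ ∃ (k : ℕ) (p : ℕ → Lit n), 1 ≤ k ∧ p 0 = l ∧ p k = negLit l ∧
        ∀ i < k, φ.Edge (p i) (p (i + 1)))
    (X : Fin n → Bool) (hX : φ.Sat X) :
    IsDelta11Model φ.Sat X ↔
      ((∀ l1 l2 l3 : Lit n, φ.Edge l1 l2 → φ.Edge l2 l3 →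
          l1.1 ≠ l2.1 → l1.1 ≠ l3.1 → l2.1 ≠ l3.1 →
          litVal X l1 = false ∧ litVal X l3 = true) ∧
        (∀ l1 l2 l3 : Lit n, φ.Edge l1 l2 → φ.Edge l1 l3 → l2 ≠ l3 →
          ¬ (litVal X l1 = false ∧ litVal X l2 = false ∧ litVal X l3 = false))) := by
  have path2 : ∀ a b : Lit n, φ.Edge a b → φ.Edge b (negLit a) → False := by
    intro a b h1 h2
    refine hnopath a ⟨2, fun k => if k = 0 then a else if k = 1 then b else negLit a,
      by norm_num, by norm_num, by norm_num, fun i hi => ?_⟩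
    interval_cases i <;> simp [h1, h2]
  constructor
  · -- forward direction
    intro hd
    constructor
    · -- C1
      intro l1 l2 l3 h12 h23 hne12 hne13 hne23
      have h3t : litVal X l3 = true := by
        rcases Bool.eq_false_or_eq_true (litVal X l3) with hx3 | hx3
        · exact hx3
        exfalso
        have hx2 : litVal X l2 = false := by
          rcases Bool.eq_false_or_eq_true (litVal X l2) with hx2 | hx2
          · exact absurd (sat_edge φ hX h23 hx2) (by simp [hx3])
          · exact hx2
        have hx1 : litVal X l1 = false := by
          rcases Bool.eq_false_or_eq_true (litVal X l1) with hx1 | hx1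
          · exact absurd (sat_edge φ hX h12 hx1) (by simp [hx2])
          · exact hx1
        exact lemD φ hd h12 h23 hne13 hx1 hx2 hx3
      refine ⟨?_, h3t⟩
      rcases Bool.eq_false_or_eq_true (litVal X l1) with hx1 | hx1
      case inr => exact hx1
      exfalso
      have hx2 := sat_edge φ hX h12 hx1
      refine lemD φ hd (edge_symm φ h23) (edge_symm φ h12)
        (by rw [negLit_fst, negLit_fst]; exact hne13.symm) ?_ ?_ ?_ <;>
        rw [litVal_negLit] <;> simp [h3t, hx2, hx1]
    · -- C2
      intro l1 l2 l3 h12 h13 hne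
      rintro ⟨hx1, hx2, hx3⟩
      exact lemE φ hd h12 h13 hne hx1 hx2 hx3
  · -- backward direction
    rintro ⟨hC1, hC2⟩
    refine ⟨hX, fun i => ?_⟩
    by_cases hfi : φ.Sat (flip1 X i)
    · exact Or.inl hfi
    right
    obtain ⟨a, b, hab, hai, hxa, hxb⟩ := unsat_flip1 φ hX hfi
    have habn := edge_fst_ne φ hab
    have hbi : b.1 ≠ i := fun h => habn (hai.trans h.symm)
    refine ⟨b.1, hbi, ?_⟩
    by_contra hns
    simp only [TwoSat.Sat] at hns; push_neg at hns
    obtain ⟨c, hc, hv1, hv2⟩ := hns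
    simp only [ne_eq, Bool.not_eq_true] at hv1 hv2
    rw [litVal_flip2 X hbi] at hv1 hv2
    obtain ⟨ed1, ed2⟩ := edge_of_clause φ hc
    have hdist := φ.distinct c hc
    by_cases h1 : c.1.1 = i ∨ c.1.1 = b.1 <;> by_cases h2 : c.2.1 = i ∨ c.2.1 = b.1
    · -- both literal variables flipped: both literals true under X → 2-cycle a → b → ¬a
      rw [if_pos h1] at hv1; rw [if_pos h2] at hv2
      simp only [Bool.not_eq_false'] at hv1 hv2
      rcases h1 with h1 | h1
      · have h2' : c.2.1 = b.1 := by
          rcases h2 with h2 | h2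
          · exact absurd (h1.trans h2.symm) hdist
          · exact h2
        have hna : negLit c.1 = a := neg_eq_of X (by rw [h1, hai]) hv1 hxa
        have hnb : negLit c.2 = b := neg_eq_of X h2' hv2 hxb
        have hc1 : c.1 = negLit a := by rw [← hna, negLit_negLit]
        rw [hnb, hc1] at ed2
        exact path2 a b hab ed2
      · have h2' : c.2.1 = i := by
          rcases h2 with h2 | h2
          · exact h2
          · exact absurd (h1.trans h2.symm) hdist
        have hnb : negLit c.1 = b := neg_eq_of X h1 hv1 hxb
        have hna : negLit c.2 = a := neg_eq_of X (by rw [h2', hai]) hv2 hxa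
        have hc2 : c.2 = negLit a := by rw [← hna, negLit_negLit]
        rw [hnb] at ed1
        rw [hc2] at ed1
        exact path2 a b hab ed1
    · -- c.1 flipped, c.2 not
      rw [if_pos h1] at hv1; rw [if_neg h2] at hv2
      simp only [Bool.not_eq_false'] at hv1
      push_neg at h2
      rcases h1 with h1 | h1
      · have hna : negLit c.1 = a := neg_eq_of X (by rw [h1, hai]) hv1 hxa
        rw [hna] at ed1
        refine hC2 a b c.2 hab ed1 (fun h => h2.2 ?_) ⟨hxa, hxb, hv2⟩
        rw [← h]
      · have hnb : negLit c.1 = b := neg_eq_of X h1 hv1 hxb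
        rw [hnb] at ed1
        have := hC1 a b c.2 hab ed1 habn
          (fun h => h2.1 (h.symm.trans hai)) (fun h => h2.2 h.symm)
        rw [hv2] at this
        exact Bool.false_ne_true this.2
    · -- c.2 flipped, c.1 not
      rw [if_neg h1] at hv1; rw [if_pos h2] at hv2
      simp only [Bool.not_eq_false'] at hv2
      push_neg at h1
      rcases h2 with h2 | h2
      · have hna : negLit c.2 = a := neg_eq_of X (by rw [h2, hai]) hv2 hxa
        rw [hna] at ed2
        refine hC2 a b c.1 hab ed2 (fun h => h1.2 ?_) ⟨hxa, hxb, hv1⟩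
        rw [← h]
      · have hnb : negLit c.2 = b := neg_eq_of X h2 hv2 hxb
        rw [hnb] at ed2
        have := hC1 a b c.1 hab ed2 habn
          (fun h => h1.1 (h.symm.trans hai)) (fun h => h1.2 h.symm)
        rw [hv1] at this
        exact Bool.false_ne_true this.2
    · -- neither flipped: clause falsified by X itself
      rw [if_neg h1] at hv1; rw [if_neg h2] at hv2
      rcases hX c hc with h | h
      · rw [hv1] at h; exact Bool.false_ne_true h
      · rw [hv2] at h; exact Bool.false_ne_true h
end

section
/- Let φ be a Boolean function on n variables. Then the set of all δ*(1,1)-models of φ is a stable set of φ; consequently, an assignment X is a δ*(1,1)-model of φ if and only if X belongs to some stable set of φ. -/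
/-- `flipSet X S` is the assignment `X` with the bits in `S` flipped. -/
def flipSet {V : Type*} [DecidableEq V] (X : V → Bool) (S : Finset V) : V → Bool :=
  fun i => if i ∈ S then ! X i else X i

/-- A `δ(r,s)`-model of `φ`: a model such that for every nonempty break set `B` of at most
`r` indices there is a repair set `S` of at most `s` indices disjoint from `B` such that
flipping `B` and then `S` yields a model. -/
def IsDeltaModel {V : Type*} [DecidableEq V] (φ : (V → Bool) → Prop) (r s : ℕ)
    (X : V → Bool) : Prop :=
  φ X ∧ ∀ B : Finset V, B.Nonempty → B.card ≤ r →
    ∃ S : Finset V, S.card ≤ s ∧ Disjoint S B ∧ φ (flipSet (flipSet X B) S)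

/-- `δ^k(r,s)`-models, defined inductively: `δ^0(r,s)`-models are the models of `φ`;
a `δ^(k+1)(r,s)`-model is a `δ^k(r,s)`-model whose breaks are all repairable to
`δ^k(r,s)`-models. -/
def IsDeltaKModel {V : Type*} [DecidableEq V] (φ : (V → Bool) → Prop) (r s : ℕ) :
    ℕ → (V → Bool) → Prop
  | 0, X => φ X
  | k + 1, X => IsDeltaKModel φ r s k X ∧
      ∀ B : Finset V, B.Nonempty → B.card ≤ r →
        ∃ S : Finset V, S.card ≤ s ∧ Disjoint S B ∧
          IsDeltaKModel φ r s k (flipSet (flipSet X B) S)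

/-- A `δ*(1,1)`-model: an assignment that is a `δ^k(1,1)`-model for every `k ≥ 0`. -/
def IsDeltaStarModel {V : Type*} [DecidableEq V] (φ : (V → Bool) → Prop)
    (X : V → Bool) : Prop :=
  ∀ k : ℕ, IsDeltaKModel φ 1 1 k X

/-- A stable set of `φ`: a set `M` of `δ(1,1)`-models of `φ` such that every break to a
member of `M` is repaired (if a repair is needed) within `M`. -/
def IsStableSet {n : ℕ} (φ : (Fin n → Bool) → Prop) (M : Set (Fin n → Bool)) : Prop :=
  (∀ X ∈ M, IsDelta11Model φ X) ∧
    ∀ X ∈ M, ∀ i : Fin n, flip1 X i ∈ M ∨ ∃ j, j ≠ i ∧ flip1 (flip1 X i) j ∈ M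

lemma flipSet_empty {V : Type*} [DecidableEq V] (X : V → Bool) : flipSet X ∅ = X := by
  funext i; simp [flipSet]

lemma flipSet_singleton {V : Type*} [DecidableEq V] (X : V → Bool) (i : V) :
    flipSet X {i} = flip1 X i := by
  funext j
  by_cases h : j = i <;> simp [flipSet, flip1, Function.update_apply, h]

lemma deltaK_of_le {V : Type*} [DecidableEq V] (φ : (V → Bool) → Prop) (r s : ℕ)
    {k l : ℕ} (h : k ≤ l) {X : V → Bool} :
    IsDeltaKModel φ r s l X → IsDeltaKModel φ r s k X := by
  induction l with
  | zero => interval_cases k; exact id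
  | succ l ih =>
    intro hX
    rcases Nat.lt_or_ge k (l + 1) with hk | hk
    · exact ih (Nat.lt_succ_iff.mp hk) hX.1
    · have : k = l + 1 := le_antisymm h hk
      subst this; exact hX

lemma star_closure {n : ℕ} (φ : (Fin n → Bool) → Prop) {X : Fin n → Bool}
    (hX : IsDeltaStarModel φ X) (i : Fin n) :
    ∃ S : Finset (Fin n), S.card ≤ 1 ∧ Disjoint S {i} ∧
      IsDeltaStarModel φ (flipSet (flipSet X {i}) S) := by
  have hch : ∀ k : ℕ, ∃ S : Finset (Fin n), S.card ≤ 1 ∧ Disjoint S {i} ∧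
      IsDeltaKModel φ 1 1 k (flipSet (flipSet X {i}) S) := by
    intro k
    exact (hX (k + 1)).2 {i} ⟨i, Finset.mem_singleton_self i⟩ (by simp)
  choose f h1 h2 h3 using hch
  obtain ⟨S, hS⟩ := Finite.exists_infinite_fiber f
  rw [Set.infinite_coe_iff] at hS
  obtain ⟨k₀, hk₀⟩ := hS.nonempty
  have hfk₀ : f k₀ = S := hk₀
  refine ⟨S, hfk₀ ▸ h1 k₀, hfk₀ ▸ h2 k₀, ?_⟩
  intro k
  obtain ⟨m, hm, hkm⟩ := hS.exists_gt k
  have hfm : f m = S := hm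
  exact deltaK_of_le φ 1 1 hkm.le (hfm ▸ h3 m)

lemma stable_sub_star {n : ℕ} (φ : (Fin n → Bool) → Prop) {M : Set (Fin n → Bool)}
    (hM : IsStableSet φ M) :
    ∀ k : ℕ, ∀ X ∈ M, IsDeltaKModel φ 1 1 k X := by
  intro k
  induction k with
  | zero => intro X hX; exact (hM.1 X hX).1
  | succ k ih =>
    intro X hX
    refine ⟨ih X hX, ?_⟩
    intro B hB hcard
    obtain ⟨i, rfl⟩ : ∃ i, B = {i} := Finset.card_eq_one.mp (le_antisymm hcard hB.card_pos)
    rcases hM.2 X hX i with h | ⟨j, hji, hj⟩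
    · exact ⟨∅, by simp, by simp,
        by rw [flipSet_empty, flipSet_singleton]; exact ih _ h⟩
    · exact ⟨{j}, by simp, by simp [Finset.disjoint_singleton, Ne.symm hji, hji],
        by rw [flipSet_singleton, flipSet_singleton]; exact ih _ hj⟩

/-- The set of all `δ*(1,1)`-models of `φ` is a stable set of `φ`;
consequently, an assignment is a `δ*(1,1)`-model of `φ` iff it belongs to some stable
set of `φ`. -/
theorem statement19 {n : ℕ} (φ : (Fin n → Bool) → Prop) :
    IsStableSet φ {X : Fin n → Bool | IsDeltaStarModel φ X} ∧
      ∀ X : Fin n → Bool,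
        IsDeltaStarModel φ X ↔ ∃ M : Set (Fin n → Bool), IsStableSet φ M ∧ X ∈ M := by
  have hstable : IsStableSet φ {X : Fin n → Bool | IsDeltaStarModel φ X} := by
    constructor
    · intro X hX
      refine ⟨hX 0, fun i => ?_⟩
      obtain ⟨S, hS1, hSd, hSstar⟩ := star_closure φ hX i
      rcases Finset.eq_empty_or_nonempty S with rfl | hne
      · left
        have := hSstar 0
        rwa [flipSet_empty, flipSet_singleton] at this
      · obtain ⟨j, rfl⟩ := Finset.card_eq_one.mp (le_antisymm hS1 hne.card_pos)
        right
        refine ⟨j, ?_, ?_⟩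
        · intro hji; subst hji
          exact (Finset.disjoint_singleton.mp hSd) rfl
        · have := hSstar 0
          rwa [flipSet_singleton, flipSet_singleton] at this
    · intro X hX i
      obtain ⟨S, hS1, hSd, hSstar⟩ := star_closure φ hX i
      rcases Finset.eq_empty_or_nonempty S with rfl | hne
      · left
        rwa [flipSet_empty, flipSet_singleton] at hSstar
      · obtain ⟨j, rfl⟩ := Finset.card_eq_one.mp (le_antisymm hS1 hne.card_pos)
        right
        refine ⟨j, ?_, ?_⟩
        · intro hji; subst hji
          exact (Finset.disjoint_singleton.mp hSd) rfl
        · rwa [flipSet_singleton, flipSet_singleton] at hSstar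
  refine ⟨hstable, fun X => ⟨fun hX => ⟨_, hstable, hX⟩, ?_⟩⟩
  rintro ⟨M, hM, hXM⟩
  exact fun k => stable_sub_star φ hM k X hXM
end
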